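/- arXiv:1610.09569 — 4 statements merged into one kernel-verified Lean document; each statement's English description precedes it below -/
import Mathlib

section
/- In the symmetric two-box model, assume a⁻_O > a⁻_I and β − μ > 2a⁺(a⁻_O + a⁻_I)/(a⁻_O − a⁻_I). Let D = (β−μ−2a⁺)²(a⁻_O−a⁻_I)² − 4a⁻_I a⁺(a⁻_O − a⁻_I)(β−μ−2a⁺). Then D ≥ 0, and the point (z₁, z₂) with z₁ = (β−μ−2a⁺)/(2a⁻_I) + √D/(2a⁻_I(a⁻_O−a⁻_I)) and z₂ = (β−μ−2a⁺)/(2a⁻_I) − √D/(2a⁻_I(a⁻_O−a⁻_I)) is an equilibrium: F₁(z₁,z₂) = F₂(z₁,z₂) = 0, and moreover z₁ > 0 and z₂ > 0. -/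
theorem two_box_asymmetric_equilibrium
    (β μ aI aO ap : ℝ) (hβμ : β > μ) (hμ : μ > 0) (hI : aI > 0)
    (hO : aO ≥ 0) (hp : ap > 0)
    (hOI : aO > aI)
    (hcond : β - μ > 2 * ap * (aO + aI) / (aO - aI)) :
    let D : ℝ := (β - μ - 2 * ap) ^ 2 * (aO - aI) ^ 2
      - 4 * aI * ap * (aO - aI) * (β - μ - 2 * ap)
    let z₁ : ℝ := (β - μ - 2 * ap) / (2 * aI) + Real.sqrt D / (2 * aI * (aO - aI))
    let z₂ : ℝ := (β - μ - 2 * ap) / (2 * aI) - Real.sqrt D / (2 * aI * (aO - aI))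
    D ≥ 0 ∧
    (β - μ - ap) * z₁ - aI * z₁ ^ 2 - aO * (z₁ * z₂) + ap * z₂ = 0 ∧
    (β - μ - ap) * z₂ - aI * z₂ ^ 2 - aO * (z₁ * z₂) + ap * z₁ = 0 ∧
    z₁ > 0 ∧ z₂ > 0 := by
  intro D z₁ z₂
  have hd : aO - aI > 0 := by linarith
  have hm : 2 * ap * (aO + aI) < (β - μ) * (aO - aI) := (div_lt_iff₀ hd).mp hcond
  have hcd : (β - μ - 2 * ap) * (aO - aI) > 4 * aI * ap := by nlinarith
  have hc : β - μ - 2 * ap > 0 := by nlinarith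
  have hD : D ≥ 0 := by
    have hD' : D = ((β - μ - 2 * ap) * (aO - aI)) *
        ((β - μ - 2 * ap) * (aO - aI) - 4 * aI * ap) := by ring
    rw [hD']
    have h1 : (β - μ - 2 * ap) * (aO - aI) > 0 := by positivity
    nlinarith
  set s := Real.sqrt D with hsdef
  have hs : s ^ 2 = D := Real.sq_sqrt hD
  have hsnn : s ≥ 0 := Real.sqrt_nonneg D
  have hIne : (2 : ℝ) * aI ≠ 0 := by positivity
  have hAne : (2 : ℝ) * aI * (aO - aI) ≠ 0 := by positivity
  have hz1 : 2 * aI * (aO - aI) * z₁ = (β - μ - 2 * ap) * (aO - aI) + s := by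
    show 2 * aI * (aO - aI) * ((β - μ - 2 * ap) / (2 * aI) + s / (2 * aI * (aO - aI))) = _
    field_simp
  have hz2 : 2 * aI * (aO - aI) * z₂ = (β - μ - 2 * ap) * (aO - aI) - s := by
    show 2 * aI * (aO - aI) * ((β - μ - 2 * ap) / (2 * aI) - s / (2 * aI * (aO - aI))) = _
    field_simp
  have h4ne : (4 : ℝ) * aI ^ 2 * (aO - aI) ^ 2 ≠ 0 := by positivity
  have key1 : (4 * aI ^ 2 * (aO - aI) ^ 2) *
      ((β - μ - ap) * z₁ - aI * z₁ ^ 2 - aO * (z₁ * z₂) + ap * z₂) = 0 := by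
    linear_combination (aO - aI) * hs
      + ((β - μ - ap) * (2 * aI * (aO - aI))
          - aI * (2 * aI * (aO - aI) * z₁ + ((β - μ - 2 * ap) * (aO - aI) + s))
          - aO * (2 * aI * (aO - aI) * z₂)) * hz1
      + (ap * (2 * aI * (aO - aI)) - aO * ((β - μ - 2 * ap) * (aO - aI) + s)) * hz2
  have key2 : (4 * aI ^ 2 * (aO - aI) ^ 2) *
      ((β - μ - ap) * z₂ - aI * z₂ ^ 2 - aO * (z₁ * z₂) + ap * z₁) = 0 := by
    linear_combination (aO - aI) * hs
      + ((β - μ - ap) * (2 * aI * (aO - aI))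
          - aI * (2 * aI * (aO - aI) * z₂ + ((β - μ - 2 * ap) * (aO - aI) - s))
          - aO * (2 * aI * (aO - aI) * z₁)) * hz2
      + (ap * (2 * aI * (aO - aI)) - aO * ((β - μ - 2 * ap) * (aO - aI) - s)) * hz1
  have e1 := (mul_eq_zero.mp key1).resolve_left h4ne
  have e2 := (mul_eq_zero.mp key2).resolve_left h4ne
  have hslt : s < (β - μ - 2 * ap) * (aO - aI) := by
    have hsE : s ^ 2 = (β - μ - 2 * ap) ^ 2 * (aO - aI) ^ 2
        - 4 * aI * ap * (aO - aI) * (β - μ - 2 * ap) := hs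
    have hCpos : (0:ℝ) < (β - μ - 2 * ap) * (aO - aI) := mul_pos hc hd
    have hpr : (0:ℝ) < 4 * aI * ap * (aO - aI) * (β - μ - 2 * ap) := by positivity
    have hsq : s ^ 2 < ((β - μ - 2 * ap) * (aO - aI)) ^ 2 := by
      rw [hsE]; nlinarith [hpr]
    exact lt_of_pow_lt_pow_left₀ 2 (le_of_lt hCpos) hsq
  have hz1pos : z₁ > 0 := by
    show (0:ℝ) < (β - μ - 2 * ap) / (2 * aI) + s / (2 * aI * (aO - aI))
    have h1 : (β - μ - 2 * ap) / (2 * aI) > 0 := by positivity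
    have h2 : s / (2 * aI * (aO - aI)) ≥ 0 := by positivity
    linarith
  have hz2pos : z₂ > 0 := by
    have h3 : z₂ = ((β - μ - 2 * ap) * (aO - aI) - s) / (2 * aI * (aO - aI)) := by
      show (β - μ - 2 * ap) / (2 * aI) - s / (2 * aI * (aO - aI)) = _
      field_simp
    rw [h3]
    apply div_pos (by linarith) (by positivity)
  exact ⟨hD, e1, e2, hz1pos, hz2pos⟩
end

section
/- In the symmetric two-box model, if a⁻_O = 0 then the only solutions of F₁(z₁,z₂) = F₂(z₁,z₂) = 0 with z₁, z₂ ≥ 0 are (0,0) and ((β−μ)/a⁻_I, (β−μ)/a⁻_I), provided β − μ > 0 and a⁺ > 0. -/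
theorem two_box_no_cross_suppression_equilibria
    (β μ aI ap : ℝ) (hβμ : β > μ) (hμ : μ > 0) (hI : aI > 0) (hp : ap > 0) :
    ∀ z₁ z₂ : ℝ, 0 ≤ z₁ → 0 ≤ z₂ →
      (β - μ - ap) * z₁ - aI * z₁ ^ 2 + ap * z₂ = 0 →
      (β - μ - ap) * z₂ - aI * z₂ ^ 2 + ap * z₁ = 0 →
      (z₁ = 0 ∧ z₂ = 0) ∨ (z₁ = (β - μ) / aI ∧ z₂ = (β - μ) / aI) := by
  intro z₁ z₂ h₁ h₂ e₁ e₂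
  by_cases heq : z₁ = z₂
  · subst heq
    have h : z₁ * ((β - μ) - aI * z₁) = 0 := by linear_combination e₁
    rcases mul_eq_zero.mp h with h0 | h0
    · left; exact ⟨h0, h0⟩
    · right
      have : z₁ = (β - μ) / aI := by field_simp; linarith
      exact ⟨this, this⟩
  · exfalso
    have key : (z₁ - z₂) * (aI * (z₁ * z₂) + ap * (z₁ + z₂)) = 0 := by
      linear_combination z₁ * e₂ - z₂ * e₁
    have hne : z₁ - z₂ ≠ 0 := sub_ne_zero.mpr heq
    have h0 : aI * (z₁ * z₂) + ap * (z₁ + z₂) = 0 :=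
      (mul_eq_zero.mp key).resolve_left hne
    have hs : 0 < z₁ + z₂ := by
      rcases lt_or_eq_of_le h₁ with h | h
      · linarith
      · rcases lt_or_eq_of_le h₂ with h' | h'
        · linarith
        · exact absurd (h.symm.trans h') heq
    nlinarith [mul_nonneg h₁ h₂]
end

section
/- In the symmetric two-box model with conditions a⁻_O > a⁻_I > 0, a⁺ > 0, β > μ > 0 and β − μ > 2a⁺(a⁻_O + a⁻_I)/(a⁻_O − a⁻_I), the quantity A = (a⁻_O − a⁻_I)((μ−β)a⁻_O + 2a⁺(a⁻_O + a⁻_I)) is strictly negative and A² − B > 0, where B is the polynomial expression from the Jacobian discriminant; consequently if B > 0 then A + √B < 0. -/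
theorem A_negative_and_discriminant
    (β μ ap aI aO : ℝ)
    (hI : aI > 0) (hOI : aO > aI) (hp : ap > 0) (hβμ : β > μ) (hμ : μ > 0)
    (hcond : β - μ > 2 * ap * (aO + aI) / (aO - aI)) :
    let A : ℝ := (aO - aI) * ((μ - β) * aO + 2 * ap * (aO + aI))
    let B : ℝ := (aI - aO) ^ 2 *
      (β ^ 2 * (-2 * aI + aO) ^ 2 + aO ^ 2 * (2 * ap + μ) ^ 2
        + 4 * aI ^ 2 * (-3 * ap ^ 2 + μ ^ 2)
        - 4 * aI * aO * (2 * ap ^ 2 + 3 * ap * μ + μ ^ 2)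
        - 2 * β * (4 * μ * aI ^ 2 + aO ^ 2 * (2 * ap + μ)
            - 2 * aI * aO * (3 * ap + 2 * μ)))
    A < 0 ∧ A ^ 2 - B > 0 ∧ (B > 0 → A + Real.sqrt B < 0) := by
  intro A B
  have hd : aO - aI > 0 := by linarith
  have hcond' : (β - μ) * (aO - aI) > 2 * ap * (aO + aI) := by
    rwa [gt_iff_lt, div_lt_iff₀ hd] at hcond
  have hA : A < 0 := by
    have : (μ - β) * aO + 2 * ap * (aO + aI) < 0 := by nlinarith
    have := mul_neg_of_pos_of_neg hd this
    simpa [A] using this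
  have key : A ^ 2 - B =
      4 * aI * (aO - aI) ^ 2 * (β - 2 * ap - μ) *
        ((β - μ) * (aO - aI) - 2 * ap * (aO + aI)) := by
    simp only [A, B]; ring
  have h2ap : β - 2 * ap - μ > 0 := by nlinarith
  have hAB : A ^ 2 - B > 0 := by
    rw [key]
    have := mul_pos (mul_pos (mul_pos (by positivity : (0:ℝ) < 4 * aI)
      (by positivity : (0:ℝ) < (aO - aI) ^ 2)) h2ap) (by linarith : (0:ℝ) < (β - μ) * (aO - aI) - 2 * ap * (aO + aI))
    linarith
  refine ⟨hA, hAB, fun hB => ?_⟩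
  have hs : Real.sqrt B < -A := by
    rw [Real.sqrt_lt' (by linarith)]
    nlinarith
  linarith
end

section
/- In the symmetric two-box model, the eigenvalues of the Jacobian at the symmetric equilibrium z* = (β−μ)/(a⁻_I + a⁻_O) are λ₁ = ((β−μ)(a⁻_O − a⁻_I) − 2a⁺(a⁻_I + a⁻_O))/(a⁻_I + a⁻_O) and λ₂ = μ − β; hence if (β−μ)(a⁻_O − a⁻_I) < 2a⁺(a⁻_I + a⁻_O) and β > μ, both eigenvalues are negative. -/
open Polynomial

lemma charpoly_symm_two (d c : ℝ) :
    (!![d, c; c, d] : Matrix (Fin 2) (Fin 2) ℝ).charpoly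
      = (X - C (d - c)) * (X - C (d + c)) := by
  have h : (!![d, c; c, d] : Matrix (Fin 2) (Fin 2) ℝ).charpoly
      = ((!![d, c; c, d] : Matrix (Fin 2) (Fin 2) ℝ).charmatrix).det := rfl
  rw [h, Matrix.det_fin_two]
  simp [Matrix.charmatrix_apply_eq, Matrix.charmatrix_apply_ne]
  ring

theorem two_box_jacobian_eigenvalues
    (β μ aI aO ap : ℝ) (hβμ : β > μ) (hμ : μ > 0) (hI : aI > 0)
    (hO : aO ≥ 0) (hp : ap ≥ 0) (hden : aI + aO > 0) :
    let z : ℝ := (β - μ) / (aI + aO)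
    let d : ℝ := β - μ - ap - (2 * aI + aO) * z
    let c : ℝ := ap - aO * z
    let J : Matrix (Fin 2) (Fin 2) ℝ := !![d, c; c, d]
    let lam₁ : ℝ := ((β - μ) * (aO - aI) - 2 * ap * (aI + aO)) / (aI + aO)
    let lam₂ : ℝ := μ - β
    J.charpoly = (X - C lam₁) * (X - C lam₂) ∧
    ((β - μ) * (aO - aI) < 2 * ap * (aI + aO) → lam₁ < 0 ∧ lam₂ < 0) := by
  intro z d c J lam₁ lam₂
  have hne : (aI + aO) ≠ 0 := ne_of_gt hden
  have hz : (aI + aO) * z = β - μ := mul_div_cancel₀ _ hne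
  have hd : d = β - μ - ap - (2 * aI + aO) * z := rfl
  have hc : c = ap - aO * z := rfl
  have hJ : J = !![d, c; c, d] := rfl
  have hlam1 : lam₁ * (aI + aO) = (β - μ) * (aO - aI) - 2 * ap * (aI + aO) :=
    div_mul_cancel₀ _ hne
  have hlam2 : lam₂ = μ - β := rfl
  clear_value z d c J lam₁ lam₂
  have hl1 : lam₁ = d - c := by
    apply mul_right_cancel₀ hne
    linear_combination hlam1 - (aI + aO) * hd + (aI + aO) * hc + 2 * aI * hz
  have hl2 : lam₂ = d + c := by
    linear_combination hlam2 - hd - hc + 2 * hz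
  refine ⟨?_, fun h => ⟨?_, ?_⟩⟩
  · rw [hJ, hl1, hl2]; exact charpoly_symm_two d c
  · rw [show lam₁ = ((β - μ) * (aO - aI) - 2 * ap * (aI + aO)) / (aI + aO) by
      field_simp at hlam1 ⊢; linarith [hlam1]]
    apply div_neg_of_neg_of_pos _ hden
    linarith
  · rw [hlam2]; linarith
end
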